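/- Let V be a module with symmetric bilinear form, let δ_1, …, δ_{k−1} be an A_{k−1} root basis, set δ_k = −Σ δ_i, let T = T_{δ_{k−1}} ⋯ T_{δ_1} with T_δ(x) = x + (x,δ)δ, and let σ be a form-preserving automorphism of V with σ(δ_i) = δ_{i+1} for all i (indices mod k). Then σ and T commute. -/
import Mathlib

/-- Product of the reversed list `[R 0, …, R (n-1)]`, i.e. `R (n-1) ∘ ⋯ ∘ R 0`. -/
def revProd {V : Type*} [AddCommGroup V] [Module ℤ V]
    (R : ℕ → V →ₗ[ℤ] V) (n : ℕ) : V →ₗ[ℤ] V :=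
  (((List.range n).map R).reverse).prod

theorem revProd_zero {V : Type*} [AddCommGroup V] [Module ℤ V]
    (R : ℕ → V →ₗ[ℤ] V) : revProd R 0 = 1 := rfl

theorem revProd_succ {V : Type*} [AddCommGroup V] [Module ℤ V]
    (R : ℕ → V →ₗ[ℤ] V) (n : ℕ) :
    revProd R (n + 1) = R n * revProd R n := by
  simp [revProd, List.range_succ]

/-- with δ_1, …, δ_{k−1} an A_{k−1} root basis, δ_k = −Σ δ_i,
T = T_{δ_{k−1}} ⋯ T_{δ_1} the Coxeter element, and σ a form-preserving
automorphism cyclically permuting δ_1, …, δ_k (σ(δ_i) = δ_{i+1}, indices mod k),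
σ and T commute. -/
theorem stmt10 {V : Type*} [AddCommGroup V] [Module ℤ V]
    (B : V →ₗ[ℤ] V →ₗ[ℤ] ℤ) (hsymm : ∀ x y : V, B x y = B y x)
    (k : ℕ) (hk : 2 ≤ k) (δ : ℕ → V)
    (hdiag : ∀ i, 1 ≤ i → i ≤ k - 1 → B (δ i) (δ i) = -2)
    (hadj : ∀ i, 1 ≤ i → i + 1 ≤ k - 1 → B (δ i) (δ (i + 1)) = 1)
    (hfar : ∀ i j, 1 ≤ i → i ≤ k - 1 → 1 ≤ j → j ≤ k - 1 → i + 2 ≤ j →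
      B (δ i) (δ j) = 0)
    (R : ℕ → V →ₗ[ℤ] V) (hR : ∀ i (x : V), R i x = x + B x (δ i) • δ i)
    (T : V →ₗ[ℤ] V)
    (hT : T = (((List.range (k - 1)).map (fun i => R (i + 1))).reverse).prod)
    (δk : V) (hδk : δk = -∑ i ∈ Finset.Icc 1 (k - 1), δ i)
    (σ : V ≃ₗ[ℤ] V) (hσB : ∀ x y : V, B (σ x) (σ y) = B x y)
    (hσcyc : ∀ i, 1 ≤ i → i ≤ k - 2 → σ (δ i) = δ (i + 1))
    (hσlast : σ (δ (k - 1)) = δk) (hσwrap : σ δk = δ 1) :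
    ∀ x : V, σ (T x) = T (σ x) := by
  obtain ⟨m, rfl⟩ : ∃ m, k = m + 2 := ⟨k - 2, by omega⟩
  have hT' : T = revProd (fun i => R (i + 1)) (m + 1) := hT
  have hδk' : δk = -∑ i ∈ Finset.Icc 1 (m + 1), δ i := hδk
  have hσlast' : σ (δ (m + 1)) = δk := hσlast
  -- one reflection preserves the form
  have hRpres : ∀ j, 1 ≤ j → j ≤ m + 1 → ∀ x y : V, B (R j x) (R j y) = B x y := by
    intro j h1 h2 x y
    rw [hR, hR]
    simp only [map_add, map_zsmul, LinearMap.add_apply, LinearMap.smul_apply,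
      smul_eq_mul]
    rw [hdiag j h1 (by omega), hsymm (δ j) y]
    ring
  -- Q n := R (n+1) ∘ ⋯ ∘ R 2 preserves the form
  have hQpres : ∀ n, n ≤ m → ∀ x y : V,
      B (revProd (fun i => R (i + 2)) n x) (revProd (fun i => R (i + 2)) n y) = B x y := by
    intro n
    induction n with
    | zero => intro _ x y; simp [revProd]
    | succ n ih =>
      intro hn x y
      simp only [revProd_succ, Module.End.mul_apply]
      rw [hRpres (n + 2) (by omega) (by omega), ih (by omega)]
  -- Q n sends δ 1 to δ 1 + ⋯ + δ (n+1)
  have hQδ1 : ∀ n, n ≤ m →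
      revProd (fun i => R (i + 2)) n (δ 1) = ∑ i ∈ Finset.Icc 1 (n + 1), δ i := by
    intro n
    induction n with
    | zero => intro _; simp [revProd]
    | succ n ih =>
      intro hn
      simp only [revProd_succ, Module.End.mul_apply]
      rw [ih (by omega), hR (n + 2)]
      have hBsum : B (∑ i ∈ Finset.Icc 1 (n + 1), δ i) (δ (n + 2)) = 1 := by
        rw [map_sum, LinearMap.sum_apply,
          Finset.sum_Icc_succ_top (by omega : 1 ≤ n + 1)]
        rw [Finset.sum_eq_zero, hadj (n + 1) (by omega) (by omega), zero_add]
        intro i hi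
        simp only [Finset.mem_Icc] at hi
        exact hfar i (n + 2) (by omega) (by omega) (by omega) (by omega) (by omega)
      rw [hBsum, Finset.sum_Icc_succ_top (by omega : 1 ≤ n + 1 + 1)]
      simp
  -- S (n+1) = Q n ∘ R 1
  have hSQ : ∀ n (y : V), revProd (fun i => R (i + 1)) (n + 1) y
      = revProd (fun i => R (i + 2)) n (R 1 y) := by
    intro n
    induction n with
    | zero =>
      intro y
      simp only [revProd_succ, Module.End.mul_apply, revProd_zero, Module.End.one_apply]
    | succ n ih =>
      intro y
      simp only [revProd_succ, Module.End.mul_apply] at ih ⊢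
      rw [ih]
  -- σ ∘ S n = Q n ∘ σ for n ≤ m
  have hσS : ∀ n, n ≤ m → ∀ x : V,
      σ (revProd (fun i => R (i + 1)) n x) = revProd (fun i => R (i + 2)) n (σ x) := by
    intro n
    induction n with
    | zero => intro _ x; simp [revProd]
    | succ n ih =>
      intro hn x
      simp only [revProd_succ, Module.End.mul_apply]
      rw [hR (n + 1), map_add, map_zsmul,
        hσcyc (n + 1) (by omega) (by omega), ih (by omega), hR (n + 2)]
      have hb : B (revProd (fun i => R (i + 1)) n x) (δ (n + 1))
          = B (revProd (fun i => R (i + 2)) n (σ x)) (δ (n + 2)) := by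
        rw [← ih (by omega), ← hσcyc (n + 1) (by omega) (by omega), hσB]
      rw [hb]
  intro x
  -- compute σ (T x)
  have key : σ (T x) = revProd (fun i => R (i + 2)) m (σ x)
      + B (revProd (fun i => R (i + 2)) m (σ x)) δk • δk := by
    rw [hT']
    simp only [revProd_succ, Module.End.mul_apply]
    rw [hR (m + 1), map_add, map_zsmul, hσlast', hσS m le_rfl]
    have hb : B (revProd (fun i => R (i + 1)) m x) (δ (m + 1))
        = B (revProd (fun i => R (i + 2)) m (σ x)) δk := by
      rw [← hσS m le_rfl, ← hσlast', hσB]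
    rw [hb]
  have hBδk : B (revProd (fun i => R (i + 2)) m (σ x)) δk = -B (σ x) (δ 1) := by
    rw [hδk', ← hQδ1 m le_rfl, map_neg, hQpres m le_rfl]
  have hsum : (∑ i ∈ Finset.Icc 1 (m + 1), δ i) = -δk := by rw [hδk', neg_neg]
  rw [key, hT', hSQ m (σ x), hR 1, map_add, map_zsmul, hQδ1 m le_rfl,
    hBδk, hsum, zsmul_neg, neg_zsmul]
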